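/- Let D ⊆ ℂ be a domain, E ⊆ D, α a countable ordinal number, and z₀ ∈ E_D^(α). Then there exists a subset Ê ⊆ E such that Ê_D^(α) = {z₀}. -/

import Mathlib

/-!
Induction on `α`, for the stronger claim that `Ê` may be taken inside any ball around `z₀`.
For `α > 0`, countability gives ordinals `βₙ < α` cofinal in `α`, and `z₀ ∈ E^(α)` gives
points `zₙ ∈ E^(βₙ)`, `zₙ ≠ z₀`, `zₙ → z₀`. The induction hypothesis yields `Fₙ ⊆ E` in a
small ball around `zₙ` missing `z₀` with `Fₙ^(βₙ) = {zₙ}`; put `Ê = ⋃ Fₙ`. Away from `z₀`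
the family `Fₙ` is locally finite and `Fₙ^(βₙ+1) = ∅`, so `Ê^(α) ⊆ {z₀}`; conversely, for
`δ < α` and large `n` the nonempty sets `Fₙ^(δ)` accumulate at `z₀`, so `z₀` survives every
stage up to `α`.
-/

open Filter Set Metric

/-- Iterated (transfinite) derived set of `E` with respect to `A`:
`E_A^(0) = E`, `E_A^(α+1) = (E_A^(α))' ∩ A`, and at limit stages the
intersection over `1 ≤ β < α`. -/
noncomputable def derivIter (A : Set ℂ) (E : Set ℂ) (o : Ordinal) : Set ℂ :=
  Ordinal.limitRecOn o E
    (fun _ ih => {z | z ∈ A ∧ AccPt z (Filter.principal ih)})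
    (fun o _ ih => ⋂ (β : Ordinal) (h : β < o) (_ : 1 ≤ β), ih β h)

open Topology

section DerivedSet

variable {X : Type*} [TopologicalSpace X]

lemma derivedSet_inter_open_subset {U : Set X} (hU : IsOpen U) (S : Set X) :
    derivedSet S ∩ U ⊆ derivedSet (S ∩ U) := fun _ ⟨hx, hxU⟩ => by
  rw [inter_comm]
  exact AccPt.nhds_inter hx (hU.mem_nhds hxU)

lemma derivedSet_derivedSet_subset [T1Space X] (S : Set X) :
    derivedSet (derivedSet S) ⊆ derivedSet S :=
  (isClosed_iff_derivedSet_subset _).1 (isClosed_derivedSet S)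

lemma Set.Subsingleton.derivedSet_eq_empty [T1Space X] {S : Set X} (hS : S.Subsingleton) :
    derivedSet S = ∅ :=
  eq_empty_of_forall_notMem fun _ hx => Set.Infinite.of_accPt hx hS.finite

end DerivedSet

section DerivIter

variable (A : Set ℂ)

lemma derivIter_zero (E : Set ℂ) : derivIter A E 0 = E :=
  Ordinal.limitRecOn_zero _ _ _

lemma derivIter_add_one (E : Set ℂ) (o : Ordinal) :
    derivIter A E (o + 1) = A ∩ derivedSet (derivIter A E o) :=
  Ordinal.limitRecOn_add_one _ _ _ _

lemma derivIter_limit (E : Set ℂ) {o : Ordinal} (ho : Order.IsSuccLimit o) :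
    derivIter A E o = ⋂ (β : Ordinal) (_ : β < o) (_ : 1 ≤ β), derivIter A E β :=
  Ordinal.limitRecOn_limit _ _ _ _ ho

lemma mem_derivIter_limit {E : Set ℂ} {o : Ordinal} (ho : Order.IsSuccLimit o) {z : ℂ} :
    z ∈ derivIter A E o ↔ ∀ β < o, 1 ≤ β → z ∈ derivIter A E β := by
  simp only [derivIter_limit A E ho, mem_iInter]

lemma derivIter_mono {E F : Set ℂ} (h : E ⊆ F) (o : Ordinal) :
    derivIter A E o ⊆ derivIter A F o := by
  induction o using Ordinal.limitRecOn with
  | zero => simpa only [derivIter_zero] using h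
  | add_one o IH =>
    simp only [derivIter_add_one]
    exact inter_subset_inter_right _ (derivedSet_mono _ _ IH)
  | limit o ho IH =>
    intro z hz
    rw [mem_derivIter_limit A ho] at hz ⊢
    exact fun β hβ h1 => IH β hβ (hz β hβ h1)

lemma derivIter_add_one_subset (E : Set ℂ) {o : Ordinal} (ho : 1 ≤ o) :
    derivIter A E (o + 1) ⊆ derivIter A E o := by
  induction o using Ordinal.limitRecOn with
  | zero => exact absurd ho (by simp)
  | add_one o _ =>
    simp only [derivIter_add_one]
    exact inter_subset_inter_right _ <| (derivedSet_mono _ _ inter_subset_right).trans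
      (derivedSet_derivedSet_subset _)
  | limit o hlim IH =>
    intro z hz
    rw [mem_derivIter_limit A hlim]
    intro β hβ h1
    refine IH β hβ h1 ?_
    rw [derivIter_add_one] at hz ⊢
    refine ⟨hz.1, derivedSet_mono _ _ (fun w hw => ?_) hz.2⟩
    exact (mem_derivIter_limit A hlim).1 hw β hβ h1

lemma derivIter_antitone (E : Set ℂ) {β γ : Ordinal} (hβ : 1 ≤ β) (hβγ : β ≤ γ) :
    derivIter A E γ ⊆ derivIter A E β := by
  induction γ using Ordinal.limitRecOn with
  | zero => exact absurd (hβ.trans hβγ) (by simp)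
  | add_one γ IH =>
    rcases hβγ.eq_or_lt with rfl | hlt
    · exact le_rfl
    have hβγ' : β ≤ γ := Order.lt_add_one_iff.1 hlt
    exact (derivIter_add_one_subset A E (hβ.trans hβγ')).trans (IH hβγ')
  | limit γ hγ _ =>
    rcases hβγ.eq_or_lt with rfl | hlt
    · exact le_rfl
    exact fun z hz => (mem_derivIter_limit A hγ).1 hz β hlt hβ

lemma derivIter_subset_add_one_of_lt (E : Set ℂ) {β γ : Ordinal} (h : β < γ) :
    derivIter A E γ ⊆ derivIter A E (β + 1) :=
  derivIter_antitone A E le_add_self (Order.add_one_le_of_lt h)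

lemma derivIter_subset_closure (E : Set ℂ) (o : Ordinal) : derivIter A E o ⊆ closure E := by
  rcases eq_or_ne o 0 with rfl | ho
  · rw [derivIter_zero]
    exact subset_closure
  · refine (derivIter_antitone A E le_rfl (Order.one_le_iff_pos.2 (pos_iff_ne_zero.2 ho))).trans ?_
    rw [← zero_add 1, derivIter_add_one, derivIter_zero]
    exact inter_subset_right.trans (derivedSet_subset_closure E)

lemma derivIter_empty (o : Ordinal) : derivIter A ∅ o = ∅ :=
  subset_empty_iff.1 <| (derivIter_subset_closure A ∅ o).trans closure_empty.subset

lemma derivIter_nonempty_of_le {E : Set ℂ} {δ o : Ordinal} (hδo : δ ≤ o)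
    (hne : (derivIter A E o).Nonempty) : (derivIter A E δ).Nonempty := by
  rcases eq_or_ne δ 0 with rfl | hδ
  · rw [derivIter_zero, nonempty_iff_ne_empty]
    rintro rfl
    simp [derivIter_empty] at hne
  · exact hne.mono (derivIter_antitone A E (Order.one_le_iff_pos.2 (pos_iff_ne_zero.2 hδ)) hδo)

lemma derivIter_add_one_eq_empty {E : Set ℂ} {o : Ordinal}
    (h : (derivIter A E o).Subsingleton) : derivIter A E (o + 1) = ∅ := by
  rw [derivIter_add_one, h.derivedSet_eq_empty, inter_empty]

lemma derivIter_inter_open_subset {U : Set ℂ} (hU : IsOpen U) (E : Set ℂ) (o : Ordinal) :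
    derivIter A E o ∩ U ⊆ derivIter A (E ∩ U) o := by
  induction o using Ordinal.limitRecOn with
  | zero => simp only [derivIter_zero, subset_rfl]
  | add_one o IH =>
    simp only [derivIter_add_one]
    rintro z ⟨⟨hzA, hz⟩, hzU⟩
    exact ⟨hzA, derivedSet_mono _ _ IH (derivedSet_inter_open_subset hU _ ⟨hz, hzU⟩)⟩
  | limit o ho IH =>
    rintro z ⟨hz, hzU⟩
    rw [mem_derivIter_limit A ho] at hz ⊢
    exact fun β hβ h1 => IH β hβ ⟨hz β hβ h1, hzU⟩

lemma derivIter_union_subset (E F : Set ℂ) (o : Ordinal) :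
    derivIter A (E ∪ F) o ⊆ derivIter A E o ∪ derivIter A F o := by
  induction o using Ordinal.limitRecOn with
  | zero => simp only [derivIter_zero, subset_rfl]
  | add_one o IH =>
    simp only [derivIter_add_one, ← inter_union_distrib_left, ← derivedSet_union]
    exact inter_subset_inter_right _ (derivedSet_mono _ _ IH)
  | limit o ho IH =>
    intro z hz
    rw [mem_derivIter_limit A ho] at hz
    by_cases hE : z ∈ derivIter A E o
    · exact Or.inl hE
    rw [mem_derivIter_limit A ho] at hE
    push Not at hE
    obtain ⟨β₀, hβ₀, h1β₀, hzβ₀⟩ := hE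
    refine Or.inr ((mem_derivIter_limit A ho).2 fun β hβ h1β => ?_)
    have h1m : 1 ≤ max β β₀ := h1β.trans (le_max_left _ _)
    rcases IH _ (max_lt hβ hβ₀) (hz _ (max_lt hβ hβ₀) h1m) with hzE | hzF
    · exact absurd (derivIter_antitone A E h1β₀ (le_max_right _ _) hzE) hzβ₀
    · exact derivIter_antitone A F h1β (le_max_left _ _) hzF

lemma derivIter_biUnion_subset {ι : Type*} (s : Finset ι) (f : ι → Set ℂ) (o : Ordinal) :
    derivIter A (⋃ i ∈ s, f i) o ⊆ ⋃ i ∈ s, derivIter A (f i) o := by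
  classical
  induction s using Finset.induction with
  | empty => simp [derivIter_empty]
  | insert i s _ IH =>
    simp only [Finset.set_biUnion_insert]
    exact (derivIter_union_subset A _ _ o).trans (union_subset_union_right _ IH)

lemma exists_mem_derivIter_of_mem_derivIter_iUnion {ι : Type*} {f : ι → Set ℂ} {U : Set ℂ}
    (hU : IsOpen U) (hfin : {i | (f i ∩ U).Nonempty}.Finite) {o : Ordinal} {w : ℂ}
    (hw : w ∈ derivIter A (⋃ i, f i) o) (hwU : w ∈ U) : ∃ i, w ∈ derivIter A (f i) o := by
  have hcover : (⋃ i, f i) ∩ U ⊆ ⋃ i ∈ hfin.toFinset, f i := by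
    rintro u ⟨hu, huU⟩
    obtain ⟨i, hi⟩ := mem_iUnion.1 hu
    exact mem_biUnion (hfin.mem_toFinset.2 ⟨u, hi, huU⟩) hi
  have := derivIter_biUnion_subset A _ f o
    (derivIter_mono A hcover o (derivIter_inter_open_subset A hU _ o ⟨hw, hwU⟩))
  obtain ⟨i, -, hi⟩ := mem_iUnion₂.1 this
  exact ⟨i, hi⟩

end DerivIter

lemma Ordinal.exists_seq_tendsto_Iio {α : Ordinal} (hα : α.card ≤ Cardinal.aleph0) (h0 : α ≠ 0) :
    ∃ β : ℕ → Iio α, Tendsto β atTop atTop := by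
  have : Countable (Iio α) := by
    rw [← Cardinal.mk_le_aleph0_iff, Cardinal.mk_Iio_ordinal, Cardinal.lift_le_aleph0]
    exact hα
  have : Nonempty (Iio α) := ⟨⟨0, pos_iff_ne_zero.2 h0⟩⟩
  exact exists_seq_tendsto atTop

section HalfBall

variable {X : Type*} [MetricSpace X]

lemma notMem_closure_ball_half_dist {x y : X} (h : x ≠ y) :
    y ∉ closure (ball x (dist x y / 2)) := fun hy => by
  have := mem_closedBall'.1 (closure_ball_subset_closedBall hy)
  linarith [dist_pos.2 h]

lemma ball_half_dist_subset_ball (x y : X) : ball x (dist x y / 2) ⊆ ball y (2 * dist x y) :=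
  ball_subset_ball' (by linarith [dist_nonneg (x := x) (y := y)])

end HalfBall

theorem derivIter_iUnion_eq_singleton {D : Set ℂ} {z₀ : ℂ} (hz₀ : z₀ ∈ D) {α : Ordinal}
    {β : ℕ → Ordinal} (hβ : ∀ n, β n < α) (hcof : ∀ γ < α, ∀ᶠ n in atTop, γ ≤ β n)
    {F : ℕ → Set ℂ} {z : ℕ → ℂ} (hF : ∀ n, derivIter D (F n) (β n) = {z n})
    (hsep : ∀ n, z₀ ∉ closure (F n)) (hlim : ∀ V ∈ 𝓝 z₀, ∀ᶠ n in atTop, F n ⊆ V) :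
    derivIter D (⋃ n, F n) α = {z₀} := by
  refine Subset.antisymm (fun w hw => by_contra fun hne => ?_) (singleton_subset_iff.2 ?_)
  · -- near `w ≠ z₀` only finitely many `F n` live, and each dies out before stage `α`
    obtain ⟨U, V, hU, hV, hwU, hz₀V, hUV⟩ := t2_separation hne
    have hfin : {n | (F n ∩ U).Nonempty}.Finite := by
      have hev : ∀ᶠ n in cofinite, F n ⊆ V :=
        Nat.cofinite_eq_atTop ▸ hlim V (hV.mem_nhds hz₀V)
      refine (eventually_cofinite.1 hev).subset ?_
      rintro n ⟨u, hu, huU⟩ hFV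
      exact hUV.le_bot ⟨huU, hFV hu⟩
    obtain ⟨n, hn⟩ := exists_mem_derivIter_of_mem_derivIter_iUnion D hU hfin hw hwU
    have hdead : derivIter D (F n) (β n + 1) = ∅ :=
      derivIter_add_one_eq_empty D ((hF n).symm ▸ subsingleton_singleton)
    have := derivIter_subset_add_one_of_lt D (F n) (hβ n) hn
    rwa [hdead] at this
  · suffices ∀ γ, 1 ≤ γ → γ ≤ α → z₀ ∈ derivIter D (⋃ n, F n) γ from
      this α (Order.one_le_iff_pos.2 (zero_le.trans_lt (hβ 0))) le_rfl
    intro γ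
    induction γ using Ordinal.limitRecOn with
    | zero => exact fun h => absurd h (by simp)
    | add_one δ _ =>
      intro _ hδα
      rw [derivIter_add_one]
      refine ⟨hz₀, accPt_iff_nhds.2 fun V hV => ?_⟩
      obtain ⟨V', hV', hV'c, hV'V⟩ := exists_mem_nhds_isClosed_subset hV
      obtain ⟨n, hδn, hFn⟩ :=
        ((hcof δ (Order.lt_add_one_iff.2 le_rfl |>.trans_le hδα)).and (hlim V' hV')).exists
      obtain ⟨y, hy⟩ := derivIter_nonempty_of_le D hδn ((hF n).symm ▸ singleton_nonempty _)
      have hyF : y ∈ closure (F n) := derivIter_subset_closure D _ δ hy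
      exact ⟨y, ⟨hV'V (closure_minimal hFn hV'c hyF),
        derivIter_mono D (subset_iUnion F n) δ hy⟩, fun h => hsep n (h ▸ hyF)⟩
    | limit γ hγ IH =>
      intro _ hγα
      exact (mem_derivIter_limit D hγ).2 fun δ hδ h1 => IH δ hδ h1 (hδ.le.trans hγα)

theorem exists_subset_inter_ball_derivIter_eq_singleton (D : Set ℂ) {α : Ordinal}
    (hα : α.card ≤ Cardinal.aleph0) {E : Set ℂ} {z₀ : ℂ} (hz₀ : z₀ ∈ derivIter D E α)
    {ε : ℝ} (hε : 0 < ε) : ∃ Ehat ⊆ E ∩ ball z₀ ε, derivIter D Ehat α = {z₀} := by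
  induction α using WellFoundedLT.induction generalizing E z₀ ε with
  | _ α IH =>
  rcases eq_or_ne α 0 with rfl | hα0
  · rw [derivIter_zero] at hz₀
    exact ⟨{z₀}, singleton_subset_iff.2 ⟨hz₀, mem_ball_self hε⟩, derivIter_zero D _⟩
  obtain ⟨β, hβ⟩ := Ordinal.exists_seq_tendsto_Iio hα hα0
  have hacc (n : ℕ) : z₀ ∈ D ∩ derivedSet (derivIter D E (β n)) := by
    rw [← derivIter_add_one]
    exact derivIter_subset_add_one_of_lt D E (β n).2 hz₀
  obtain ⟨r, -, hr, hr0⟩ := exists_seq_strictAnti_tendsto' (half_pos hε)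
  have hz (n : ℕ) : ∃ z ∈ ball z₀ (r n) ∩ derivIter D E (β n), z ≠ z₀ :=
    accPt_iff_nhds.1 (hacc n).2 _ (ball_mem_nhds _ (hr n).1)
  choose z hz hzne using hz
  have hF (n : ℕ) := IH (β n) (β n).2 ((Ordinal.card_le_card (β n).2.le).trans hα) (hz n).2
    (half_pos (dist_pos.2 (hzne n)))
  choose F hFE hF using hF
  have hFball (n : ℕ) : F n ⊆ ball z₀ (2 * r n) := fun u hu =>
    ball_subset_ball (by linarith [mem_ball.1 (hz n).1])
      (ball_half_dist_subset_ball _ _ (hFE n hu).2)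
  have hcof : ∀ γ < α, ∀ᶠ n in atTop, γ ≤ (β n : Ordinal) := fun γ hγ =>
    tendsto_atTop.1 hβ ⟨γ, hγ⟩
  have hsep (n : ℕ) : z₀ ∉ closure (F n) := fun h =>
    notMem_closure_ball_half_dist (hzne n) (closure_mono ((hFE n).trans inter_subset_right) h)
  have hlim : ∀ V ∈ 𝓝 z₀, ∀ᶠ n in atTop, F n ⊆ V := fun V hV => by
    obtain ⟨δ, hδ, hδV⟩ := Metric.mem_nhds_iff.1 hV
    filter_upwards [hr0.eventually (gt_mem_nhds (half_pos hδ))] with n hn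
    exact (hFball n).trans ((ball_subset_ball (by linarith)).trans hδV)
  refine ⟨⋃ n, F n, iUnion_subset fun n u hu => ⟨(hFE n hu).1, ?_⟩,
    derivIter_iUnion_eq_singleton (hacc 0).1 (fun n => (β n).2) hcof hF hsep hlim⟩
  exact ball_subset_ball (by linarith [(hr n).2]) (hFball n hu)

theorem stmt_11_general (D : Set ℂ) (E : Set ℂ) (α : Ordinal) (hα : α.card ≤ Cardinal.aleph0) (z₀ : ℂ)
    (hz₀ : z₀ ∈ derivIter D E α) :
    ∃ Ehat ⊆ E, derivIter D Ehat α = {z₀} := by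
  obtain ⟨Ehat, hsub, heq⟩ := exists_subset_inter_ball_derivIter_eq_singleton D hα hz₀ one_pos
  exact ⟨Ehat, hsub.trans inter_subset_left, heq⟩

theorem stmt_11 (D : Set ℂ) (hD : IsOpen D) (hDc : IsConnected D) (E : Set ℂ) (hE : E ⊆ D)
    (α : Ordinal) (hα : α.card ≤ Cardinal.aleph0) (z₀ : ℂ) (hz₀ : z₀ ∈ derivIter D E α) :
    ∃ Ehat ⊆ E, derivIter D Ehat α = {z₀} :=
  stmt_11_general D E α hα z₀ hz₀
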